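/- arXiv:2212.09801 — 4 statements merged into one kernel-verified Lean document; each statement's English description precedes it below -/
import Mathlib

section
/- Let e : ℝ × ℝ → ℝ be differentiable, let v : ℝ, and define the fold F : ℝⁿ → ℝ by F(a) = e(e(...e(v, a₀), a₁)..., a_{n-1}). Writing v₀ = v and v_{k+1} = e(v_k, a_k), the partial derivative of F with respect to a_i equals (∏ j > i, ∂₁e(v_{j}, a_j)) * ∂₂e(v_i, a_i). -/
/-!
Changing `a i` affects the fold only from step `i` on: as a function of `t`, the fold is
`G (e (v_i, t))`, where `G` folds the remaining entries `a_{i+1}, …` starting from its argument.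
The chain rule along the trajectory `v_{i+1}, v_{i+2}, …` shows that `G'` is the product of the
`∂₁e (v_j, a_j)`, `j > i`.
-/

open Finset

variable {𝕜 α : Type*} [NontriviallyNormedField 𝕜]

theorem hasDerivAt_foldl_ofFn_init {m : ℕ} (f : 𝕜 → α → 𝕜) (b : Fin m → α) (w : Fin (m + 1) → 𝕜)
    (hw : ∀ k : Fin m, w k.succ = f (w k.castSucc) (b k))
    (hf : ∀ k : Fin m, DifferentiableAt 𝕜 (f · (b k)) (w k.castSucc)) :
    HasDerivAt (fun z => (List.ofFn b).foldl f z)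
      (∏ k, deriv (f · (b k)) (w k.castSucc)) (w 0) := by
  induction m with
  | zero => simpa using hasDerivAt_id' (w 0)
  | succ m ih =>
    have htail := ih (Fin.tail b) (Fin.tail w) (fun k => hw k.succ) (fun k => hf k.succ)
    rw [Fin.tail, hw 0, Fin.castSucc_zero] at htail
    rw [List.ofFn_succ, Fin.prod_univ_succ, mul_comm]
    exact htail.comp (w 0) (hf 0).hasDerivAt

theorem hasDerivAt_foldl_ofFn_update {n : ℕ} (f : 𝕜 → 𝕜 → 𝕜)
    (hf₁ : ∀ x y, DifferentiableAt 𝕜 (f · y) x) (hf₂ : ∀ x y, DifferentiableAt 𝕜 (f x ·) y)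
    (a : Fin n → 𝕜) (w : Fin (n + 1) → 𝕜)
    (hw : ∀ k : Fin n, w k.succ = f (w k.castSucc) (a k)) (i : Fin n) :
    HasDerivAt (fun t => (List.ofFn (Function.update a i t)).foldl f (w 0))
      ((∏ j > i, deriv (f · (a j)) (w j.castSucc)) * deriv (f (w i.castSucc)) (a i)) (a i) := by
  induction n with
  | zero => exact i.elim0
  | succ n ih =>
    cases a using Fin.consCases with | cons x a => ?_
    have hw_tail : ∀ k : Fin n, Fin.tail w k.succ = f (Fin.tail w k.castSucc) (a k) :=
      fun k => hw k.succ
    have hw_zero : Fin.tail w 0 = f (w 0) x := hw 0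
    cases i using Fin.cases with
    | zero =>
      have hsuffix := hasDerivAt_foldl_ofFn_init f a (Fin.tail w) hw_tail (fun k => hf₁ _ _)
      rw [hw_zero] at hsuffix
      simp only [Fin.update_cons_zero, List.ofFn_cons, List.foldl_cons, Fin.prod_Ioi_zero,
        Fin.cons_succ, Fin.cons_zero, Fin.castSucc_zero]
      exact hsuffix.comp x (hf₂ _ _).hasDerivAt
    | succ j =>
      have hsuffix := ih a (Fin.tail w) hw_tail j
      rw [hw_zero] at hsuffix
      simp only [← Fin.cons_update, List.ofFn_cons, List.foldl_cons, Fin.prod_Ioi_succ,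
        Fin.cons_succ]
      exact hsuffix

/-- Partial derivative of a left fold `F(a) = foldl e v a` with respect to `a i`:
it equals `(∏ j > i, ∂₁e(v_j, a_j)) * ∂₂e(v_i, a_i)`, where `v_0 = v` and
`v_{k+1} = e (v_k, a_k)` are the intermediate values of the fold. -/
theorem deriv_foldl_component
    (n : ℕ) (e : ℝ × ℝ → ℝ) (he : Differentiable ℝ e) (v : ℝ)
    (a : Fin n → ℝ) (vseq : Fin (n + 1) → ℝ)
    (hv0 : vseq 0 = v)
    (hvs : ∀ k : Fin n, vseq k.succ = e (vseq k.castSucc, a k))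
    (i : Fin n) :
    deriv (fun t =>
        List.foldl (fun x y => e (x, y)) v (List.ofFn (Function.update a i t))) (a i) =
      (∏ j ∈ Finset.univ.filter (fun j : Fin n => i < j),
          deriv (fun x => e (x, a j)) (vseq j.castSucc)) *
        deriv (fun y => e (vseq i.castSucc, y)) (a i) := by
  have hf₁ : ∀ x y, DifferentiableAt ℝ (fun x => e (x, y)) x := fun x y =>
    (he.comp (differentiable_id.prodMk (differentiable_const y))) x
  have hf₂ : ∀ x y, DifferentiableAt ℝ (fun y => e (x, y)) y := fun x y =>
    (he.comp ((differentiable_const x).prodMk differentiable_id)) y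
  subst hv0
  rw [filter_lt_eq_Ioi]
  exact (hasDerivAt_foldl_ofFn_update (fun x y => e (x, y)) hf₁ hf₂ a vseq hvs i).deriv
end

section
/- Correctness of reverse-mode for a binary operation composed with two arguments: if e₁, e₂ : ℝⁿ → ℝ are differentiable at x and op : ℝ × ℝ → ℝ is differentiable at (e₁ x, e₂ x), then the gradient of y ↦ op(e₁ y, e₂ y) at x equals ∂₁op(e₁ x, e₂ x) • ∇e₁(x) + ∂₂op(e₁ x, e₂ x) • ∇e₂(x). -/
/-! By the chain rule the derivative of `y ↦ op (e₁ y, e₂ y)` is `L ∘ (De₁ x, De₂ x)` with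
`L = Dop (e₁ x, e₂ x)`, and `L (a, b) = a • L (1, 0) + b • L (0, 1)`, where `L (1, 0)` and `L (0, 1)`
are the partial derivatives of `op`. Over `ℝ` the Riesz map is linear, so the gradients combine
with the same coefficients. -/

open InnerProductSpace

section PartialDeriv

variable {𝕜 F G : Type*} [NontriviallyNormedField 𝕜] [NormedAddCommGroup F] [NormedSpace 𝕜 F]
  [NormedAddCommGroup G] [NormedSpace 𝕜 G]

theorem HasFDerivAt.hasDerivAt_comp_prodMk_left {op : 𝕜 × G → F} {L : 𝕜 × G →L[𝕜] F}
    {a : 𝕜} {b : G} (h : HasFDerivAt op L (a, b)) :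
    HasDerivAt (fun s => op (s, b)) (L (1, 0)) a :=
  h.comp_hasDerivAt a ((hasDerivAt_id a).prodMk (hasDerivAt_const a b))

theorem HasFDerivAt.hasDerivAt_comp_prodMk_right {op : G × 𝕜 → F} {L : G × 𝕜 →L[𝕜] F}
    {a : G} {b : 𝕜} (h : HasFDerivAt op L (a, b)) :
    HasDerivAt (fun s => op (a, s)) (L (0, 1)) b :=
  h.comp_hasDerivAt b ((hasDerivAt_const b a).prodMk (hasDerivAt_id b))

end PartialDeriv

theorem ContinuousLinearMap.apply_prod_eq_smul_add_smul {R M : Type*} [Semiring R]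
    [TopologicalSpace R] [AddCommMonoid M] [Module R M] [TopologicalSpace M]
    (L : R × R →L[R] M) (a b : R) :
    L (a, b) = a • L (1, 0) + b • L (0, 1) := by
  rw [← map_smul, ← map_smul, ← map_add]
  simp

theorem HasGradientAt.comp_prodMk {E : Type*} [NormedAddCommGroup E] [InnerProductSpace ℝ E]
    [CompleteSpace E] {e₁ e₂ : E → ℝ} {g₁ g₂ x : E} {op : ℝ × ℝ → ℝ} {L : ℝ × ℝ →L[ℝ] ℝ}
    (h₁ : HasGradientAt e₁ g₁ x) (h₂ : HasGradientAt e₂ g₂ x)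
    (hop : HasFDerivAt op L (e₁ x, e₂ x)) :
    HasGradientAt (fun y => op (e₁ y, e₂ y)) (L (1, 0) • g₁ + L (0, 1) • g₂) x := by
  rw [hasGradientAt_iff_hasFDerivAt] at *
  refine (hop.comp x (h₁.prodMk h₂)).congr_fderiv ?_
  ext v
  rw [ContinuousLinearMap.comp_apply, ContinuousLinearMap.prod_apply,
    L.apply_prod_eq_smul_add_smul]
  simp only [toDual_apply_apply, inner_add_left, real_inner_smul_left, smul_eq_mul]
  ring

/-- Correctness of reverse-mode for a binary operation:
`∇(y ↦ op (e₁ y, e₂ y))(x) = ∂₁op • ∇e₁(x) + ∂₂op • ∇e₂(x)`. -/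
theorem gradient_binary_op
    (n : ℕ) (e₁ e₂ : EuclideanSpace ℝ (Fin n) → ℝ)
    (x : EuclideanSpace ℝ (Fin n))
    (h1 : DifferentiableAt ℝ e₁ x) (h2 : DifferentiableAt ℝ e₂ x)
    (op : ℝ × ℝ → ℝ) (hop : DifferentiableAt ℝ op (e₁ x, e₂ x)) :
    gradient (fun y => op (e₁ y, e₂ y)) x =
      (deriv (fun s => op (s, e₂ x)) (e₁ x)) • gradient e₁ x +
        (deriv (fun s => op (e₁ x, s)) (e₂ x)) • gradient e₂ x := by
  rw [hop.hasFDerivAt.hasDerivAt_comp_prodMk_left.deriv,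
    hop.hasFDerivAt.hasDerivAt_comp_prodMk_right.deriv]
  exact (h1.hasGradientAt.comp_prodMk h2.hasGradientAt hop.hasFDerivAt).gradient
end

section
/- Correctness of the reverse derivative of map2: let e : ℝ × ℝ → ℝ be differentiable and define F : ℝⁿ × ℝⁿ → ℝⁿ by F(a,b)_i = e(a_i, b_i). Then for any cotangent z : ℝⁿ, the adjoint of the derivative of F at (a,b) applied to z is the pair of vectors (λ i, ∂₁e(a_i,b_i) * z_i , λ i, ∂₂e(a_i,b_i) * z_i). -/
/-!
Every coordinate of `F` is `e` composed with the continuous linear map `p ↦ (p.1 i, p.2 i)`, so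
by the chain rule `DF(a,b)` acts diagonally, `(DF v)ᵢ = ∂₁e · v.1ᵢ + ∂₂e · v.2ᵢ`, and the adjoint of
such a diagonal map multiplies the cotangent coordinatewise by the conjugated coefficients.
-/

open ContinuousLinearMap

open scoped ENNReal

section PartialDerivatives

variable {𝕜 E F G : Type*} [NontriviallyNormedField 𝕜] [NormedAddCommGroup E] [NormedSpace 𝕜 E]
  [NormedAddCommGroup F] [NormedSpace 𝕜 F] [NormedAddCommGroup G] [NormedSpace 𝕜 G]

theorem DifferentiableAt.fderiv_prod_apply {e : E × F → G} {x : E} {y : F}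
    (he : DifferentiableAt 𝕜 e (x, y)) (u : E) (v : F) :
    fderiv 𝕜 e (x, y) (u, v) =
      fderiv 𝕜 (fun s => e (s, y)) x u + fderiv 𝕜 (fun t => e (x, t)) y v := by
  have h₁ : HasFDerivAt (fun s => e (s, y)) (fderiv 𝕜 e (x, y) ∘L inl 𝕜 E F) x :=
    he.hasFDerivAt.comp x (hasFDerivAt_prodMk_left x y)
  have h₂ : HasFDerivAt (fun t => e (x, t)) (fderiv 𝕜 e (x, y) ∘L inr 𝕜 E F) y :=
    he.hasFDerivAt.comp y (hasFDerivAt_prodMk_right x y)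
  rw [h₁.fderiv, h₂.fderiv, comp_apply, comp_apply, ← map_add, inl_apply, inr_apply,
    Prod.mk_add_mk, add_zero, zero_add]

theorem DifferentiableAt.fderiv_prod_apply_eq_smul_deriv {e : 𝕜 × 𝕜 → G} {x y : 𝕜}
    (he : DifferentiableAt 𝕜 e (x, y)) (u v : 𝕜) :
    fderiv 𝕜 e (x, y) (u, v) =
      u • deriv (fun s => e (s, y)) x + v • deriv (fun t => e (x, t)) y := by
  rw [he.fderiv_prod_apply, fderiv_eq_smul_deriv, fderiv_eq_smul_deriv]

end PartialDerivatives

section Componentwise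

variable {𝕜 ι E F G : Type*} [NontriviallyNormedField 𝕜] [Fintype ι]
  [NormedAddCommGroup E] [NormedSpace 𝕜 E] [NormedAddCommGroup F] [NormedSpace 𝕜 F]
  [NormedAddCommGroup G] [NormedSpace 𝕜 G]
  {p q₁ q₂ r : ℝ≥0∞} [Fact (1 ≤ p)] [Fact (1 ≤ q₁)] [Fact (1 ≤ q₂)] [Fact (1 ≤ r)]

local notation "X" => WithLp p (PiLp q₁ (fun _ : ι => E) × PiLp q₂ (fun _ : ι => F))

theorem fderiv_map₂_apply {e : E × F → G} {Φ : X → PiLp r (fun _ : ι => G)}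
    (hΦ : ∀ x i, Φ x i = e (x.fst i, x.snd i)) {x : X}
    (he : ∀ i, DifferentiableAt 𝕜 e (x.fst i, x.snd i)) (v : X) (i : ι) :
    fderiv 𝕜 Φ x v i = fderiv 𝕜 e (x.fst i, x.snd i) (v.fst i, v.snd i) := by
  let π : ι → X →L[𝕜] E × F := fun i =>
    (PiLp.proj q₁ _ i ∘L WithLp.fstL p 𝕜 _ _).prod (PiLp.proj q₂ _ i ∘L WithLp.sndL p 𝕜 _ _)
  have hcoord : ∀ i, HasFDerivAt (fun x => Φ x i) (fderiv 𝕜 e (x.fst i, x.snd i) ∘L π i) x := by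
    intro i
    simp only [hΦ]
    exact (he i).hasFDerivAt.comp x (π i).hasFDerivAt
  have hΦd : DifferentiableAt 𝕜 Φ x :=
    (differentiableAt_piLp r).2 fun i => (hcoord i).differentiableAt
  have hproj := (PiLp.proj r (fun _ : ι => G) i).hasFDerivAt.comp x hΦd.hasFDerivAt
  exact (DFunLike.congr_fun ((hcoord i).unique hproj) v).symm

end Componentwise

section Adjoint

variable {𝕜 ι : Type*} [RCLike 𝕜] [Fintype ι]

open ComplexConjugate in
theorem adjoint_apply_of_apply_eq_mul_add_mul
    {L : WithLp 2 (EuclideanSpace 𝕜 ι × EuclideanSpace 𝕜 ι) →L[𝕜] EuclideanSpace 𝕜 ι}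
    {c d : ι → 𝕜} (hL : ∀ v i, L v i = c i * v.fst i + d i * v.snd i) (z : EuclideanSpace 𝕜 ι) :
    adjoint L z =
      WithLp.toLp 2
        (WithLp.toLp 2 fun i => conj (c i) * z i, WithLp.toLp 2 fun i => conj (d i) * z i) := by
  refine ext_inner_right 𝕜 fun v => ?_
  rw [adjoint_inner_left, WithLp.prod_inner_apply, PiLp.inner_apply, PiLp.inner_apply,
    PiLp.inner_apply, ← Finset.sum_add_distrib]
  refine Finset.sum_congr rfl fun i _ => ?_
  simp only [hL, RCLike.inner_apply, map_mul, RCLike.conj_conj, WithLp.ofLp_fst,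
    WithLp.ofLp_snd]
  ring

end Adjoint

/-- Correctness of the reverse derivative of `map2`: for the componentwise map
`F(a,b) i = e (a i, b i)`, the adjoint of `DF(a,b)` applied to a cotangent `z`
is the pair `(fun i => ∂₁e(a i, b i) * z i, fun i => ∂₂e(a i, b i) * z i)`. -/
theorem adjoint_fderiv_map2
    (n : ℕ) (e : ℝ × ℝ → ℝ) (he : Differentiable ℝ e)
    (F : WithLp 2 (EuclideanSpace ℝ (Fin n) × EuclideanSpace ℝ (Fin n)) →
      EuclideanSpace ℝ (Fin n))
    (hF : ∀ p : WithLp 2 (EuclideanSpace ℝ (Fin n) × EuclideanSpace ℝ (Fin n)),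
      ∀ i : Fin n, F p i =
        e ((WithLp.equiv 2 (EuclideanSpace ℝ (Fin n) × EuclideanSpace ℝ (Fin n)) p).1 i,
           (WithLp.equiv 2 (EuclideanSpace ℝ (Fin n) × EuclideanSpace ℝ (Fin n)) p).2 i))
    (a b z : EuclideanSpace ℝ (Fin n)) :
    ContinuousLinearMap.adjoint
        (fderiv ℝ F
          ((WithLp.equiv 2 (EuclideanSpace ℝ (Fin n) × EuclideanSpace ℝ (Fin n))).symm (a, b)))
        z =
      (WithLp.equiv 2 (EuclideanSpace ℝ (Fin n) × EuclideanSpace ℝ (Fin n))).symm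
        ((WithLp.toLp 2 (fun i => deriv (fun s => e (s, b i)) (a i) * z i) : EuclideanSpace ℝ (Fin n)),
         (WithLp.toLp 2 (fun i => deriv (fun s => e (a i, s)) (b i) * z i) : EuclideanSpace ℝ (Fin n))) := by
  have hDF : ∀ v i, fderiv ℝ F (WithLp.toLp 2 (a, b)) v i =
      deriv (fun s => e (s, b i)) (a i) * v.fst i + deriv (fun t => e (a i, t)) (b i) * v.snd i := by
    intro v i
    rw [fderiv_map₂_apply hF (fun i => he _) v i, (he _).fderiv_prod_apply_eq_smul_deriv,
      smul_eq_mul, smul_eq_mul, mul_comm, mul_comm (v.snd i)]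
    rfl
  simpa using adjoint_apply_of_apply_eq_mul_add_mul hDF z
end

section
/- Correctness of the reverse derivative of reduce: let e : ℝ × ℝ → ℝ be differentiable with two-sided unit v, and F(a) = foldl e v a with intermediates v₀ = v, v_{k+1} = e(v_k, a_k). Then for any z : ℝ, the adjoint of the derivative of F at a applied to z is the vector whose i-th component is ∂₂e(v_i, a_i) * (∏ j > i, ∂₁e(v_j, a_j)) * z. -/
/-!
Peeling off the last input, `F a = e (F (init a), a_last)`. By the chain rule the derivative
of `F` is `∂₁e(v_{n-1}, a_{n-1})` times that of the shorter fold plus `∂₂e(v_{n-1}, a_{n-1})`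
in the last coordinate, so by induction the coefficient of `a_i` is
`∂₂e(v_i, a_i) * ∏ j > i, ∂₁e(v_j, a_j)`. The adjoint of a linear functional on Euclidean space
sends `z` to `z` times the vector of its values on the basis vectors.
-/

open Finset

theorem List.foldl_ofFn_eq_last {α β : Type*} {f : α → β → α} :
    ∀ {n : ℕ} (a : Fin n → β) (s : Fin (n + 1) → α),
      (∀ k : Fin n, s k.succ = f (s k.castSucc) (a k)) →
        (List.ofFn a).foldl f (s 0) = s (Fin.last n)
  | 0, _, _, _ => rfl
  | n + 1, a, s, hs => by
    rw [List.ofFn_succ, List.foldl_cons, ← Fin.castSucc_zero, ← hs 0]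
    exact List.foldl_ofFn_eq_last (Fin.tail a) (fun k => s k.succ) fun k => hs k.succ

theorem fderiv_prod_apply_eq_partials {𝕜 F : Type*} [NontriviallyNormedField 𝕜]
    [NormedAddCommGroup F] [NormedSpace 𝕜 F] {e : 𝕜 × 𝕜 → F} {p : 𝕜 × 𝕜}
    (he : DifferentiableAt 𝕜 e p) (u w : 𝕜) :
    fderiv 𝕜 e p (u, w) =
      u • deriv (fun x => e (x, p.2)) p.1 + w • deriv (fun y => e (p.1, y)) p.2 := by
  have hx : HasDerivAt (fun x => e (x, p.2)) (fderiv 𝕜 e p (1, 0)) p.1 :=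
    he.hasFDerivAt.comp_hasDerivAt_of_eq p.1 ((hasDerivAt_id _).prodMk (hasDerivAt_const _ _)) rfl
  have hy : HasDerivAt (fun y => e (p.1, y)) (fderiv 𝕜 e p (0, 1)) p.2 :=
    he.hasFDerivAt.comp_hasDerivAt_of_eq p.2 ((hasDerivAt_const _ _).prodMk (hasDerivAt_id _)) rfl
  rw [hx.deriv, hy.deriv, ← map_smul, ← map_smul, ← map_add]
  simp

theorem EuclideanSpace.adjoint_dual_apply {𝕜 ι : Type*} [RCLike 𝕜] [Fintype ι]
    [DecidableEq ι] (ℓ : EuclideanSpace 𝕜 ι →L[𝕜] 𝕜) (z : 𝕜) (i : ι) :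
    ContinuousLinearMap.adjoint ℓ z i = starRingEnd 𝕜 (ℓ (EuclideanSpace.single i 1)) * z := by
  rw [mul_comm]
  simpa [EuclideanSpace.inner_single_left] using
    ContinuousLinearMap.adjoint_inner_right ℓ (EuclideanSpace.single i 1) z

noncomputable def foldlPartialDeriv (e : ℝ × ℝ → ℝ) {n : ℕ} (a : Fin n → ℝ)
    (s : Fin (n + 1) → ℝ) (i : Fin n) : ℝ :=
  deriv (fun y => e (s i.castSucc, y)) (a i) *
    ∏ j ∈ univ.filter (fun j : Fin n => i < j), deriv (fun x => e (x, a j)) (s j.castSucc)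

theorem foldlPartialDeriv_last (e : ℝ × ℝ → ℝ) {n : ℕ} (a : Fin (n + 1) → ℝ)
    (s : Fin (n + 2) → ℝ) :
    foldlPartialDeriv e a s (Fin.last n) =
      deriv (fun y => e (s (Fin.last n).castSucc, y)) (a (Fin.last n)) := by
  rw [foldlPartialDeriv, filter_false_of_mem fun j _ => (Fin.le_last j).not_gt, prod_empty, mul_one]

theorem foldlPartialDeriv_castSucc (e : ℝ × ℝ → ℝ) {n : ℕ} (a : Fin (n + 1) → ℝ)
    (s : Fin (n + 2) → ℝ) (i : Fin n) :
    foldlPartialDeriv e a s i.castSucc =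
      foldlPartialDeriv e (Fin.init a) (Fin.init s) i *
        deriv (fun x => e (x, a (Fin.last n))) (s (Fin.last n).castSucc) := by
  simp only [foldlPartialDeriv, prod_filter, Fin.prod_univ_castSucc, Fin.castSucc_lt_castSucc_iff,
    Fin.castSucc_lt_last, if_true, Fin.init]
  ring

theorem hasFDerivAt_foldl_ofFn {e : ℝ × ℝ → ℝ} :
    ∀ {n : ℕ} (a : Fin n → ℝ) (s : Fin (n + 1) → ℝ),
      (∀ k : Fin n, s k.succ = e (s k.castSucc, a k)) →
      (∀ k : Fin n, DifferentiableAt ℝ e (s k.castSucc, a k)) →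
      HasFDerivAt (fun b : Fin n → ℝ => (List.ofFn b).foldl (fun x y => e (x, y)) (s 0))
        (∑ i, foldlPartialDeriv e a s i • (ContinuousLinearMap.proj i : (Fin n → ℝ) →L[ℝ] ℝ)) a
  | 0, a, s, _, _ => by simpa using hasFDerivAt_const (s 0) a
  | n + 1, a, s, hs, he => by
    have hs_init (k : Fin n) : Fin.init s k.succ = e (Fin.init s k.castSucc, Fin.init a k) := by
      simp only [Fin.init, ← Fin.succ_castSucc, hs]
    have ih := hasFDerivAt_foldl_ofFn (Fin.init a) (Fin.init s) hs_init fun k => he k.castSucc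
    have hval : (List.ofFn (Fin.init a)).foldl (fun x y => e (x, y)) (s 0) =
        s (Fin.last n).castSucc :=
      List.foldl_ofFn_eq_last (Fin.init a) (Fin.init s) hs_init
    have hinit : HasFDerivAt (Fin.init : (Fin (n + 1) → ℝ) → Fin n → ℝ) _ a :=
      (ContinuousLinearMap.pi fun j : Fin n =>
        ContinuousLinearMap.proj (R := ℝ) (φ := fun _ : Fin (n + 1) => ℝ) j.castSucc).hasFDerivAt
    have hsnoc : (fun b : Fin (n + 1) → ℝ => (List.ofFn b).foldl (fun x y => e (x, y)) (s 0)) =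
        fun b => e ((List.ofFn (Fin.init b)).foldl (fun x y => e (x, y)) (s 0), b (Fin.last n)) :=
      funext fun b => by rw [List.ofFn_succ', List.concat_eq_append, List.foldl_concat]; rfl
    have hstep := (hval ▸ (he (Fin.last n)).hasFDerivAt).comp a
      ((ih.comp a hinit).prodMk (hasFDerivAt_apply (Fin.last n) a))
    rw [hsnoc]
    refine hstep.congr_fderiv (ContinuousLinearMap.ext fun h => ?_)
    rw [hval, ContinuousLinearMap.comp_apply, ContinuousLinearMap.prod_apply,
      fderiv_prod_apply_eq_partials (he (Fin.last n))]
    simp only [ContinuousLinearMap.comp_apply, ContinuousLinearMap.coe_pi',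
      ContinuousLinearMap.proj_apply, add_apply, _root_.sum_apply, smul_apply,
      smul_eq_mul, sum_mul, Fin.sum_univ_castSucc, foldlPartialDeriv_castSucc,
      foldlPartialDeriv_last]
    congr 1
    · exact sum_congr rfl fun i _ => mul_right_comm _ _ _
    · exact mul_comm _ _

theorem adjoint_fderiv_reduce_general
    (n : ℕ) (e : ℝ × ℝ → ℝ) (he : Differentiable ℝ e) (v : ℝ)
    (F : EuclideanSpace ℝ (Fin n) → ℝ)
    (hF : ∀ a : EuclideanSpace ℝ (Fin n),
      F a = List.foldl (fun x y => e (x, y)) v (List.ofFn a))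
    (a : EuclideanSpace ℝ (Fin n)) (vseq : Fin (n + 1) → ℝ)
    (hv0 : vseq 0 = v)
    (hvs : ∀ k : Fin n, vseq k.succ = e (vseq k.castSucc, a k))
    (z : ℝ) (i : Fin n) :
    ContinuousLinearMap.adjoint (fderiv ℝ F a) z i =
      deriv (fun y => e (vseq i.castSucc, y)) (a i) *
        (∏ j ∈ Finset.univ.filter (fun j : Fin n => i < j),
          deriv (fun x => e (x, a j)) (vseq j.castSucc)) * z := by
  have hFG : F = (fun b : Fin n → ℝ => (List.ofFn b).foldl (fun x y => e (x, y)) (vseq 0)) ∘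
      WithLp.ofLp := funext fun b => by rw [hF, hv0]; rfl
  have hF' := (hasFDerivAt_foldl_ofFn a.ofLp vseq hvs fun k => he _).comp a
    (PiLp.hasFDerivAt_ofLp 2 a)
  rw [EuclideanSpace.adjoint_dual_apply, hFG, hF'.fderiv]
  simp [foldlPartialDeriv]

/-- Correctness of the reverse derivative of `reduce`: for the left fold
`F(a) = foldl e v a` with intermediates `v_0 = v`, `v_{k+1} = e (v_k, a_k)`,
the adjoint of `DF(a)` applied to `z : ℝ` has `i`-th component
`∂₂e(v_i, a_i) * (∏ j > i, ∂₁e(v_j, a_j)) * z`. -/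
theorem adjoint_fderiv_reduce
    (n : ℕ) (e : ℝ × ℝ → ℝ) (he : Differentiable ℝ e) (v : ℝ)
    (h1 : ∀ x, e (v, x) = x) (h2 : ∀ x, e (x, v) = x)
    (F : EuclideanSpace ℝ (Fin n) → ℝ)
    (hF : ∀ a : EuclideanSpace ℝ (Fin n),
      F a = List.foldl (fun x y => e (x, y)) v (List.ofFn a))
    (a : EuclideanSpace ℝ (Fin n)) (vseq : Fin (n + 1) → ℝ)
    (hv0 : vseq 0 = v)
    (hvs : ∀ k : Fin n, vseq k.succ = e (vseq k.castSucc, a k))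
    (z : ℝ) (i : Fin n) :
    ContinuousLinearMap.adjoint (fderiv ℝ F a) z i =
      deriv (fun y => e (vseq i.castSucc, y)) (a i) *
        (∏ j ∈ Finset.univ.filter (fun j : Fin n => i < j),
          deriv (fun x => e (x, a j)) (vseq j.castSucc)) * z :=
  adjoint_fderiv_reduce_general n e he v F hF a vseq hv0 hvs z i
end
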